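/- arXiv:1008.5393 — 2 statements merged into one kernel-verified Lean document; each statement's English description precedes it below -/
import Mathlib

section
/- For a zero-mean bivariate Gaussian vector (X,Y) with unit variances and correlation coefficient ϱ satisfying |ϱ| < 1, the orthant probability satisfies P(X ≥ 0, Y ≥ 0) = 1/4 + arcsin(ϱ)/(2π). -/
open Real MeasureTheory

/-- Density of a zero-mean bivariate Gaussian with unit variances and correlation ϱ. -/
noncomputable def phi2 (ϱ x y : ℝ) : ℝ :=
  (1 / (2 * π * Real.sqrt (1 - ϱ^2))) *
    Real.exp (-(x^2 - 2*ϱ*x*y + y^2) / (2 * (1 - ϱ^2)))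

/-!
Completing the square, `x² - 2ϱxy + y² = (1 - ϱ²) x² + (y - ϱx)²`, so the substitution
`y = √(1 - ϱ²) v + ϱ x` turns `phi2 ϱ` into the standard Gaussian density on the plane and the
quadrant `{x ≥ 0, y ≥ 0}` into the wedge `{x ≥ 0, sin α · x + cos α · v ≥ 0}`, `α = arcsin ϱ`.
That wedge is the cone over the arc `[-α, π/2]`, and by rotation invariance the standard Gaussian
gives a cone the mass (length of its arc) / 2π, here `(π/2 + α) / 2π`.
-/

open Set

theorem integral_Ioi_mul_exp_neg_sq_div_two :
    ∫ r in Ioi (0 : ℝ), r * exp (-r ^ 2 / 2) = 1 := by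
  have h := integral_mul_cexp_neg_mul_sq (b := (1 / 2 : ℂ)) (by norm_num)
  norm_num at h
  apply Complex.ofReal_injective
  rw [← integral_complex_ofReal, Complex.ofReal_one, ← h]
  congr! 2 with r
  push_cast
  ring_nf

theorem setIntegral_preimage_mul_add {E : Type*} [NormedAddCommGroup E] [NormedSpace ℝ E]
    (a b : ℝ) {S : Set ℝ} (hS : MeasurableSet S) (F : ℝ → E) :
    ∫ v in (fun v ↦ a * v + b) ⁻¹' S, F (a * v + b) = |a⁻¹| • ∫ y in S, F y := by
  calc ∫ v in (fun v ↦ a * v + b) ⁻¹' S, F (a * v + b)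
      = ∫ v, S.indicator F (a * v + b) := by
        rw [← integral_indicator (hS.preimage (by fun_prop))]; rfl
    _ = |a⁻¹| • ∫ u, S.indicator F (u + b) :=
        Measure.integral_comp_mul_left (fun u ↦ S.indicator F (u + b)) a
    _ = |a⁻¹| • ∫ y in S, F y := by rw [integral_add_right_eq_self, integral_indicator hS]

theorem setIntegral_prod_inter_preimage_prodMk {α β E : Type*} [MeasurableSpace α]
    [MeasurableSpace β] [NormedAddCommGroup E] [NormedSpace ℝ E] {μ : Measure α} {ν : Measure β}
    [SFinite μ] [SFinite ν] {f : α × β → E} (hf : Integrable f (μ.prod ν)) (s : Set α)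
    {H : Set (α × β)} (hH : MeasurableSet H) :
    ∫ p in s ×ˢ univ ∩ H, f p ∂μ.prod ν = ∫ x in s, ∫ y in Prod.mk x ⁻¹' H, f (x, y) ∂ν ∂μ := by
  rw [← setIntegral_indicator hH, setIntegral_prod _ (hf.indicator hH).integrableOn]
  congr! 2 with x
  rw [Measure.restrict_univ, ← integral_indicator (measurable_prodMk_left hH)]
  rfl

noncomputable def stdGaussianPlanePDF (p : ℝ × ℝ) : ℝ :=
  (2 * π)⁻¹ * exp (-(p.1 ^ 2 + p.2 ^ 2) / 2)

theorem integrable_stdGaussianPlanePDF : Integrable stdGaussianPlanePDF := by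
  have h : Integrable (fun x : ℝ ↦ exp (-(1 / 2) * x ^ 2)) := integrable_exp_neg_mul_sq (by norm_num)
  have hprod : stdGaussianPlanePDF =
      fun p ↦ (2 * π)⁻¹ * exp (-(1 / 2) * p.1 ^ 2) * exp (-(1 / 2) * p.2 ^ 2) := by
    funext p
    rw [stdGaussianPlanePDF, mul_assoc, ← exp_add]
    ring_nf
  rw [hprod]
  exact (h.const_mul _).mul_prod h

theorem setIntegral_stdGaussianPlanePDF_of_smul_mem_iff {C : Set (ℝ × ℝ)} (hC : MeasurableSet C)
    (hcone : ∀ r : ℝ, 0 < r → ∀ p, r • p ∈ C ↔ p ∈ C) :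
    ∫ p in C, stdGaussianPlanePDF p =
      volume.real {θ ∈ Ioo (-π) π | (cos θ, sin θ) ∈ C} / (2 * π) := by
  set Θ := {θ : ℝ | (cos θ, sin θ) ∈ C}
  have hΘ : MeasurableSet Θ := hC.preimage (by fun_prop)
  have hpolar : ∀ p ∈ Ioi 0 ×ˢ Ioo (-π) π,
      p.1 • C.indicator stdGaussianPlanePDF (polarCoord.symm p)
        = (p.1 * exp (-p.1 ^ 2 / 2)) * Θ.indicator (fun _ ↦ (2 * π)⁻¹) p.2 := by
    rintro ⟨r, θ⟩ ⟨hr, -⟩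
    have hmem : (r * cos θ, r * sin θ) ∈ C ↔ θ ∈ Θ := hcone r hr (cos θ, sin θ)
    have hval : stdGaussianPlanePDF (r * cos θ, r * sin θ) = (2 * π)⁻¹ * exp (-r ^ 2 / 2) := by
      rw [stdGaussianPlanePDF, mul_pow, mul_pow, ← mul_add, cos_sq_add_sin_sq, mul_one]
    simp only [polarCoord_symm_apply, smul_eq_mul]
    by_cases hθ : θ ∈ Θ
    · rw [indicator_of_mem (hmem.2 hθ), indicator_of_mem hθ, hval]; ring
    · rw [indicator_of_notMem (mt hmem.1 hθ), indicator_of_notMem hθ]; simp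
  rw [← integral_indicator hC, ← integral_comp_polarCoord_symm, polarCoord_target,
    setIntegral_congr_fun (measurableSet_Ioi.prod measurableSet_Ioo) hpolar, Measure.volume_eq_prod,
    setIntegral_prod_mul (fun r ↦ r * exp (-r ^ 2 / 2)) (fun θ ↦ Θ.indicator _ θ),
    integral_Ioi_mul_exp_neg_sq_div_two, one_mul, setIntegral_indicator hΘ, setIntegral_const,
    smul_eq_mul, div_eq_mul_inv]
  rfl

theorem phi2_mul_add {ϱ : ℝ} (hϱ : |ϱ| < 1) (x v : ℝ) :
    phi2 ϱ x (√(1 - ϱ ^ 2) * v + ϱ * x) = (√(1 - ϱ ^ 2))⁻¹ * stdGaussianPlanePDF (x, v) := by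
  have hϱ2 : ϱ ^ 2 < 1 := by rw [← sq_abs]; nlinarith [abs_nonneg ϱ]
  have hs2 : √(1 - ϱ ^ 2) ^ 2 = 1 - ϱ ^ 2 := sq_sqrt (by linarith)
  have hexp : -(x ^ 2 - 2 * ϱ * x * (√(1 - ϱ ^ 2) * v + ϱ * x) + (√(1 - ϱ ^ 2) * v + ϱ * x) ^ 2)
      / (2 * (1 - ϱ ^ 2)) = -(x ^ 2 + v ^ 2) / 2 := by
    rw [div_eq_div_iff (by nlinarith) two_ne_zero]
    linear_combination (-2 * v ^ 2) * hs2
  rw [phi2, hexp, stdGaussianPlanePDF]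
  ring

theorem setIntegral_Ici_phi2 {ϱ : ℝ} (hϱ : |ϱ| < 1) (x : ℝ) :
    ∫ y in Ici 0, phi2 ϱ x y =
      ∫ v in {v | 0 ≤ ϱ * x + √(1 - ϱ ^ 2) * v}, stdGaussianPlanePDF (x, v) := by
  have hs : 0 < √(1 - ϱ ^ 2) := sqrt_pos.2 (by nlinarith [abs_lt.1 hϱ])
  have h := setIntegral_preimage_mul_add (√(1 - ϱ ^ 2)) (ϱ * x) (measurableSet_Ici (a := 0))
    (phi2 ϱ x)
  have hpre : (fun v ↦ √(1 - ϱ ^ 2) * v + ϱ * x) ⁻¹' Ici 0 =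
      {v | 0 ≤ ϱ * x + √(1 - ϱ ^ 2) * v} := by
    ext v; simp [add_comm]
  simp_rw [hpre, phi2_mul_add hϱ, integral_const_mul, abs_of_pos (inv_pos.2 hs), smul_eq_mul] at h
  exact (mul_left_cancel₀ (inv_ne_zero hs.ne') h).symm

def wedge (α : ℝ) : Set (ℝ × ℝ) :=
  Ici 0 ×ˢ univ ∩ {p | 0 ≤ sin α * p.1 + cos α * p.2}

theorem measurableSet_wedge (α : ℝ) : MeasurableSet (wedge α) :=
  (measurableSet_Ici.prod .univ).inter (measurableSet_le measurable_const (by fun_prop))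

theorem smul_mem_wedge_iff {α r : ℝ} (hr : 0 < r) (p : ℝ × ℝ) : r • p ∈ wedge α ↔ p ∈ wedge α := by
  simp only [wedge, mem_inter_iff, mem_prod, mem_Ici, mem_univ, and_true, mem_ofPred_eq,
    Prod.smul_fst, Prod.smul_snd, smul_eq_mul, mul_left_comm _ r, ← mul_add,
    mul_nonneg_iff_of_pos_left hr]

theorem setOf_cos_sin_mem_wedge {α : ℝ} (hα : α ∈ Ioo (-(π / 2)) (π / 2)) :
    {θ ∈ Ioo (-π) π | (cos θ, sin θ) ∈ wedge α} = Icc (-α) (π / 2) := by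
  ext θ
  simp only [wedge, mem_ofPred_eq, mem_inter_iff, mem_prod, mem_Ici, mem_univ, and_true,
    ← sin_add, mem_Ioo, mem_Icc]
  obtain ⟨hα1, hα2⟩ := hα
  constructor
  · rintro ⟨⟨hθ1, hθ2⟩, hcos, hsin⟩
    have hθ : |θ| ≤ π / 2 := by
      rwa [← Angle.toReal_coe_eq_self_iff.2 ⟨hθ1, hθ2.le⟩,
        ← Angle.cos_nonneg_iff_abs_toReal_le_pi_div_two, Angle.cos_coe]
    obtain ⟨hθl, hθr⟩ := abs_le.1 hθ
    refine ⟨?_, hθr⟩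
    by_contra! h
    exact (sin_neg_of_neg_of_neg_pi_lt (by linarith) (by linarith)).not_ge hsin
  · rintro ⟨hl, hr⟩
    exact ⟨⟨by linarith, by linarith⟩, cos_nonneg_of_neg_pi_div_two_le_of_le (by linarith) hr,
      sin_nonneg_of_nonneg_of_le_pi (by linarith) (by linarith)⟩

/-- Sheppard's formula for the bivariate Gaussian orthant probability. -/
theorem bivariate_orthant_probability (ϱ : ℝ) (hϱ : |ϱ| < 1) :
    (∫ x in Set.Ici (0:ℝ), ∫ y in Set.Ici (0:ℝ), phi2 ϱ x y)
      = 1/4 + Real.arcsin ϱ / (2 * π) := by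
  obtain ⟨h1, h2⟩ := abs_lt.1 hϱ
  set α := arcsin ϱ
  have hα : α ∈ Ioo (-(π / 2)) (π / 2) :=
    ⟨neg_pi_div_two_lt_arcsin.2 h1, arcsin_lt_pi_div_two.2 h2⟩
  have hsin : sin α = ϱ := sin_arcsin h1.le h2.le
  have hcos : cos α = √(1 - ϱ ^ 2) := cos_arcsin ϱ
  calc (∫ x in Ici 0, ∫ y in Ici 0, phi2 ϱ x y)
      = ∫ x in Ici 0, ∫ v in Prod.mk x ⁻¹' {p : ℝ × ℝ | 0 ≤ sin α * p.1 + cos α * p.2},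
          stdGaussianPlanePDF (x, v) := by
        rw [hsin, hcos]
        exact setIntegral_congr_fun measurableSet_Ici fun x _ ↦ setIntegral_Ici_phi2 hϱ x
    _ = ∫ p in wedge α, stdGaussianPlanePDF p :=
        (setIntegral_prod_inter_preimage_prodMk integrable_stdGaussianPlanePDF _
          (measurableSet_le measurable_const (by fun_prop))).symm
    _ = volume.real (Icc (-α) (π / 2)) / (2 * π) := by
        rw [setIntegral_stdGaussianPlanePDF_of_smul_mem_iff (measurableSet_wedge α)
          (fun r hr ↦ smul_mem_wedge_iff hr), setOf_cos_sin_mem_wedge hα]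
    _ = 1 / 4 + α / (2 * π) := by
        rw [volume_real_Icc_of_le (by linarith [hα.1, pi_pos])]
        field_simp
        ring
end

section
/- For λ ∈ ℝ, the function f(t) = sinc(2Wt) + (λ/2)·sinc(2Wt − 1/2) + (λ/2)·sinc(2Wt + 1/2) has L² energy ∫ f(t)² dt = (1/(2W))·(λ²/2 + 4λ/π + 1), so the normalized pulse g = f·√(2W/(λ²/2 + 4λ/π + 1)) has unit energy. -/
/-!
The shifted sincs `x ↦ sinc (x - a)` are the Fourier transforms of the modulated boxes
`t ↦ e^{2πiat} 1_{[-1/2, 1/2]}(t)`. Hence `sinc (x - a) * sinc (x - b)` is the Fourier transform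
of the convolution of two such boxes, and Fourier inversion at `0` gives
`∫ sinc (x - a) * sinc (x - b) dx = sinc (a - b)`. The energy of the pulse is then a finite Gram sum
over the shifts `0, ±1/2`, whose entries are `sinc 0 = 1`, `sinc (±1/2) = 2/π` and `sinc 1 = 0`;
the substitution `u = 2Wt` contributes the factor `1/(2W)`.
-/

open Real hiding sinc sinc_zero sinc_neg
open MeasureTheory FourierTransform Set Filter
open scoped Convolution

/-- The sinc function, sinc(t) = sin(πt)/(πt) with sinc(0) = 1. -/
noncomputable def sinc (t : ℝ) : ℝ := if t = 0 then 1 else Real.sin (π * t) / (π * t)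

theorem Real.mul_sinc (x : ℝ) : x * Real.sinc x = Real.sin x := by
  rcases eq_or_ne x 0 with rfl | hx
  · simp
  · rw [Real.sinc_of_ne_zero hx, mul_div_cancel₀ _ hx]

theorem sinc_eq_real_sinc_pi_mul : sinc = fun t => Real.sinc (π * t) := by
  ext t
  simp [sinc, Real.sinc, Real.pi_ne_zero]

theorem sinc_zero : sinc 0 = 1 := by
  simp [sinc]

theorem sinc_neg (t : ℝ) : sinc (-t) = sinc t := by
  simp [sinc_eq_real_sinc_pi_mul]

theorem sinc_half : sinc (1 / 2) = 2 / π := by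
  rw [sinc, if_neg (by norm_num), show π * (1 / 2) = π / 2 by ring, Real.sin_pi_div_two]
  field_simp

theorem sinc_one : sinc 1 = 0 := by
  simp [sinc]

theorem sinc_sq_mul_one_add_sq_le (t : ℝ) : sinc t ^ 2 * (1 + t ^ 2) ≤ 2 := by
  have h_sinc : Real.sinc (π * t) ^ 2 ≤ 1 := by
    rw [sq_le_one_iff_abs_le_one]; exact Real.abs_sinc_le_one _
  have h_sin : (π * t * Real.sinc (π * t)) ^ 2 ≤ 1 := by
    rw [Real.mul_sinc, sq_le_one_iff_abs_le_one]; exact Real.abs_sin_le_one _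
  have hπ : 1 ≤ π ^ 2 := by nlinarith [Real.pi_gt_three]
  rw [sinc_eq_real_sinc_pi_mul]
  nlinarith [mul_le_mul_of_nonneg_left hπ
    (mul_nonneg (sq_nonneg (Real.sinc (π * t))) (sq_nonneg t))]

theorem memLp_sinc_comp_sub (a : ℝ) : MemLp (fun x => sinc (x - a)) 2 := by
  have h_meas : AEStronglyMeasurable (fun x => sinc (x - a)) := by
    rw [sinc_eq_real_sinc_pi_mul]; fun_prop
  refine (memLp_two_iff_integrable_sq h_meas).2 <|
    ((integrable_inv_one_add_sq.comp_sub_right a).const_mul 2).mono' (h_meas.pow 2) ?_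
  refine Eventually.of_forall fun x => ?_
  rw [norm_pow, Real.norm_eq_abs, sq_abs, ← div_eq_mul_inv, le_div_iff₀ (by positivity)]
  exact sinc_sq_mul_one_add_sq_le _

theorem integrable_sinc_sub_mul_sinc_sub (a b : ℝ) :
    Integrable fun x => sinc (x - a) * sinc (x - b) :=
  (memLp_sinc_comp_sub a).integrable_mul (memLp_sinc_comp_sub b)

section ConvolutionContinuity

variable {𝕜 G E E' F : Type*} [NontriviallyNormedField 𝕜]
  [NormedAddCommGroup E] [NormedSpace 𝕜 E] [NormedAddCommGroup E'] [NormedSpace 𝕜 E']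
  [NormedAddCommGroup F] [NormedSpace 𝕜 F] [NormedSpace ℝ F]
  [AddGroup G] [TopologicalSpace G] [IsTopologicalAddGroup G] [FirstCountableTopology G]
  [MeasurableSpace G] [MeasurableAdd₂ G] [MeasurableNeg G]
  {μ : Measure G} [SFinite μ] [μ.IsAddRightInvariant]

theorem continuousAt_convolution_of_ae_continuousAt (L : E →L[𝕜] E' →L[𝕜] F)
    {f : G → E} {g : G → E'} {C : ℝ} (x₀ : G) (hf : Integrable f μ) (hg : StronglyMeasurable g)
    (hgC : ∀ y, ‖g y‖ ≤ C) (hg_cont : ∀ᵐ y ∂μ, ContinuousAt g y) :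
    ContinuousAt (f ⋆[L, μ] g) x₀ := by
  have hg_cont' : ∀ᵐ t ∂μ, ContinuousAt g (x₀ - t) :=
    (quasiMeasurePreserving_sub_left_of_right_invariant μ x₀).ae hg_cont
  refine continuousAt_of_dominated (bound := fun t => ‖L‖ * ‖f t‖ * C) ?_ ?_
    ((hf.norm.const_mul _).mul_const _) ?_
  · refine Eventually.of_forall fun x => ?_
    exact L.aestronglyMeasurable_comp₂ hf.aestronglyMeasurable
      (hg.comp_measurable (measurable_const.sub measurable_id)).aestronglyMeasurable
  · refine Eventually.of_forall fun x => Eventually.of_forall fun t => ?_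
    calc ‖L (f t) (g (x - t))‖ ≤ ‖L‖ * ‖f t‖ * ‖g (x - t)‖ := L.le_opNorm₂ _ _
      _ ≤ ‖L‖ * ‖f t‖ * C := by gcongr; exact hgC _
  · filter_upwards [hg_cont'] with t ht
    exact (L (f t)).continuous.continuousAt.comp
      (ht.comp_of_eq (continuousAt_id.sub continuousAt_const) rfl)

end ConvolutionContinuity

noncomputable def modulatedBox (c : ℝ) : ℝ → ℂ :=
  (Icc (-(1 / 2)) (1 / 2)).indicator fun t => Complex.exp (2 * π * c * t * Complex.I)

theorem integral_exp_Icc_eq_sinc (θ : ℝ) :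
    ∫ t in Icc (-(1 / 2) : ℝ) (1 / 2), Complex.exp (2 * π * θ * t * Complex.I) = sinc θ := by
  rw [integral_Icc_eq_integral_Ioc, ← intervalIntegral.integral_of_le (by norm_num)]
  rcases eq_or_ne θ 0 with rfl | hθ
  · norm_num [sinc]
  have hc : 2 * π * θ * Complex.I ≠ 0 := by simp [Real.pi_ne_zero, hθ]
  simp_rw [show ∀ t : ℝ, (2 * π * θ * t * Complex.I : ℂ) = 2 * π * θ * Complex.I * t from
    fun t => by ring]
  rw [integral_exp_mul_complex hc,
    show 2 * π * θ * Complex.I * ((1 / 2 : ℝ) : ℂ) = (π * θ : ℂ) * Complex.I by push_cast; ring,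
    show 2 * π * θ * Complex.I * ((-(1 / 2) : ℝ) : ℂ) = -(π * θ : ℂ) * Complex.I by push_cast; ring,
    Complex.exp_mul_I, Complex.exp_mul_I, Complex.cos_neg, Complex.sin_neg, sinc, if_neg hθ]
  push_cast
  field_simp
  ring

theorem integrable_modulatedBox (c : ℝ) : Integrable (modulatedBox c) :=
  (integrable_indicator_iff measurableSet_Icc).2 (by fun_prop : Continuous _).integrableOn_Icc

theorem stronglyMeasurable_modulatedBox (c : ℝ) : StronglyMeasurable (modulatedBox c) :=
  (by fun_prop : Continuous _).stronglyMeasurable.indicator measurableSet_Icc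

theorem norm_modulatedBox_le (c t : ℝ) : ‖modulatedBox c t‖ ≤ 1 := by
  unfold modulatedBox
  by_cases ht : t ∈ Icc (-(1 / 2) : ℝ) (1 / 2)
  · rw [indicator_of_mem ht, ← Complex.ofReal_ofNat, ← Complex.ofReal_mul, ← Complex.ofReal_mul,
      ← Complex.ofReal_mul, Complex.norm_exp_ofReal_mul_I]
  · rw [indicator_of_notMem ht, norm_zero]; exact zero_le_one

theorem ae_continuousAt_modulatedBox (c : ℝ) : ∀ᵐ t, ContinuousAt (modulatedBox c) t := by
  have h_frontier : (frontier (Icc (-(1 / 2) : ℝ) (1 / 2))).Countable := by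
    rw [frontier_Icc (by norm_num)]; exact (toFinite _).countable
  filter_upwards [h_frontier.ae_notMem volume] with t ht
  exact (by fun_prop : Continuous _).continuousOn.continuousAt_indicator ht

theorem fourier_modulatedBox (c ξ : ℝ) : 𝓕 (modulatedBox c) ξ = sinc (ξ - c) := by
  rw [Real.fourier_real_eq_integral_exp_smul, ← sinc_neg, ← integral_exp_Icc_eq_sinc,
    ← integral_indicator measurableSet_Icc]
  congr 1 with t
  by_cases ht : t ∈ Icc (-(1 / 2) : ℝ) (1 / 2)
  · simp only [modulatedBox, indicator_of_mem ht, smul_eq_mul, ← Complex.exp_add]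
    congr 1; push_cast; ring
  · rw [modulatedBox, indicator_of_notMem ht, indicator_of_notMem ht, smul_zero]

theorem modulatedBox_convolution_apply_zero (a b : ℝ) :
    (modulatedBox a ⋆[ContinuousLinearMap.mul ℂ ℂ] modulatedBox b) 0 = sinc (a - b) := by
  rw [convolution_def, ← integral_exp_Icc_eq_sinc, ← integral_indicator measurableSet_Icc]
  congr 1 with t
  by_cases ht : t ∈ Icc (-(1 / 2) : ℝ) (1 / 2)
  · have ht' : 0 - t ∈ Icc (-(1 / 2) : ℝ) (1 / 2) := by
      rw [zero_sub, mem_Icc]; constructor <;> linarith [ht.1, ht.2]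
    simp only [modulatedBox, indicator_of_mem ht, indicator_of_mem ht',
      ContinuousLinearMap.mul_apply', ← Complex.exp_add]
    congr 1; push_cast; ring
  · rw [modulatedBox, indicator_of_notMem ht, indicator_of_notMem ht, map_zero, zero_apply]

theorem integral_sinc_sub_mul_sinc_sub (a b : ℝ) :
    ∫ x, sinc (x - a) * sinc (x - b) = sinc (a - b) := by
  set h := modulatedBox a ⋆[ContinuousLinearMap.mul ℂ ℂ] modulatedBox b
  have h_fourier : 𝓕 h = fun x => ((sinc (x - a) * sinc (x - b) : ℝ) : ℂ) := by
    ext x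
    rw [Real.fourier_mul_convolution_eq (integrable_modulatedBox a) (integrable_modulatedBox b),
      fourier_modulatedBox, fourier_modulatedBox, Complex.ofReal_mul]
  have h_cont : ContinuousAt h 0 :=
    continuousAt_convolution_of_ae_continuousAt _ 0 (integrable_modulatedBox a)
      (stronglyMeasurable_modulatedBox b) (norm_modulatedBox_le b) (ae_continuousAt_modulatedBox b)
  have h_inv : 𝓕⁻ (𝓕 h) 0 = h 0 :=
    ((integrable_modulatedBox a).integrable_convolution _
      (integrable_modulatedBox b)).fourierInv_fourier_eq
      (h_fourier ▸ (integrable_sinc_sub_mul_sinc_sub a b).ofReal) h_cont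
  rw [h_fourier, Real.fourierInv_eq, show h 0 = _ from modulatedBox_convolution_apply_zero a b]
    at h_inv
  simp only [inner_zero_right, AddChar.map_zero_eq_one, one_smul] at h_inv
  exact_mod_cast h_inv

theorem integral_sum_mul_sinc_sub_sq {ι : Type*} (s : Finset ι) (c a : ι → ℝ) :
    ∫ x, (∑ i ∈ s, c i * sinc (x - a i)) ^ 2
      = ∑ i ∈ s, ∑ j ∈ s, c i * c j * sinc (a i - a j) := by
  have h_int : ∀ i j, Integrable fun x => c i * c j * (sinc (x - a i) * sinc (x - a j)) :=
    fun i j => (integrable_sinc_sub_mul_sinc_sub (a i) (a j)).const_mul _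
  simp_rw [sq, Finset.sum_mul_sum, mul_mul_mul_comm]
  rw [integral_finsetSum _ fun i _ => integrable_finsetSum _ fun j _ => h_int i j]
  refine Finset.sum_congr rfl fun i _ => ?_
  rw [integral_finsetSum _ fun j _ => h_int i j]
  refine Finset.sum_congr rfl fun j _ => ?_
  rw [integral_const_mul, integral_sinc_sub_mul_sinc_sub]

noncomputable def pulse (lam u : ℝ) : ℝ :=
  sinc u + lam / 2 * sinc (u - 1 / 2) + lam / 2 * sinc (u + 1 / 2)

theorem integral_pulse_sq (lam : ℝ) :
    ∫ u, pulse lam u ^ 2 = lam ^ 2 / 2 + 4 * lam / π + 1 := by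
  have h := integral_sum_mul_sinc_sub_sq Finset.univ ![1, lam / 2, lam / 2] ![0, 1 / 2, -(1 / 2)]
  simp only [Fin.sum_univ_three, Matrix.cons_val_zero, Matrix.cons_val_one, Matrix.cons_val_two,
    Matrix.head_cons, Matrix.tail_cons, sub_zero, sub_neg_eq_add, one_mul] at h
  unfold pulse
  rw [h, show (0 : ℝ) - 1 / 2 = -(1 / 2) by norm_num, show (1 / 2 : ℝ) + 1 / 2 = 1 by norm_num,
    show -(1 / 2 : ℝ) - 1 / 2 = -1 by norm_num, sinc_neg, sinc_neg, zero_add, sub_self,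
    neg_add_cancel, sinc_zero, sinc_half, sinc_one]
  field_simp
  ring

theorem pulse_energy_coeff_pos (lam : ℝ) : 0 < lam ^ 2 / 2 + 4 * lam / π + 1 := by
  have hπ : 8 < π ^ 2 := by nlinarith [Real.pi_gt_three]
  have h : lam ^ 2 / 2 + 4 * lam / π + 1 = (lam + 4 / π) ^ 2 / 2 + (π ^ 2 - 8) / π ^ 2 := by
    field_simp; ring
  rw [h]
  have := Real.pi_pos
  positivity

/-- The pulse f(t) = sinc(2Wt) + (λ/2)sinc(2Wt − 1/2) + (λ/2)sinc(2Wt + 1/2)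
has energy (1/(2W))·(λ²/2 + 4λ/π + 1), so its normalization has unit energy. -/
theorem pulse_energy (W lam : ℝ) (hW : 0 < W) :
    (∫ t : ℝ, (_root_.sinc (2*W*t) + (lam/2) * _root_.sinc (2*W*t - 1/2)
        + (lam/2) * _root_.sinc (2*W*t + 1/2))^2)
      = (1/(2*W)) * (lam^2/2 + 4*lam/π + 1) ∧
    (∫ t : ℝ, (Real.sqrt (2*W / (lam^2/2 + 4*lam/π + 1)) *
        (_root_.sinc (2*W*t) + (lam/2) * _root_.sinc (2*W*t - 1/2)
          + (lam/2) * _root_.sinc (2*W*t + 1/2)))^2) = 1 := by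
  have h_pos := pulse_energy_coeff_pos lam
  set Q := lam ^ 2 / 2 + 4 * lam / π + 1
  have h_energy : ∫ t, pulse lam (2 * W * t) ^ 2 = 1 / (2 * W) * Q := by
    rw [Measure.integral_comp_mul_left (fun u => pulse lam u ^ 2), integral_pulse_sq,
      abs_of_pos (by positivity), smul_eq_mul, one_div]
  have h_normalized : ∫ t, (√(2 * W / Q) * pulse lam (2 * W * t)) ^ 2 = 1 := by
    simp_rw [mul_pow, Real.sq_sqrt (by positivity : 0 ≤ 2 * W / Q)]
    rw [integral_const_mul, h_energy]
    field_simp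
  exact ⟨h_energy, h_normalized⟩
end
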